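/- Let (M,g) be a Riemannian manifold with a vector field U and a unit vector field ξ, and let A be a symmetric (1,1)-tensor field and φ a (1,1)-tensor field with ∇_X ξ = φAX, U = φAξ, and (∇_Xφ)Y = η(Y)AX − g(AX,Y)ξ. Then at each point, for an orthonormal frame {e_i}, div U = Σ_i g(∇_{e_i} U, e_i) = h·η(Aξ) − η(A²ξ) − Σ_i g((∇_{e_i}A)ξ, φ e_i) − Σ_i g(φ A e_i, A φ e_i), where h = Tr A. -/
import Mathlib


/-- div U = h η(Aξ) − η(A²ξ) − Σ g((∇_{e_i}A)ξ, φe_i) − Σ g(φAe_i, Aφe_i),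
for U = φAξ and an orthonormal frame {e_i}. -/
theorem stmt_12 {R W : Type*} [CommRing R] [AddCommGroup W] [Module R W]
    (nabla : W → W → W) (g : W →ₗ[R] W →ₗ[R] R)
    (A φ : W →ₗ[R] W) (ξ : W) {n : ℕ} (e : Fin n → W)
    (hadd : ∀ X Y Z : W, nabla X (Y + Z) = nabla X Y + nabla X Z)
    (hgsym : ∀ X Y : W, g X Y = g Y X)
    (hAsym : ∀ X Y : W, g (A X) Y = g X (A Y))
    (hskew : ∀ X Y : W, g (φ X) Y = -g X (φ Y))
    (hunit : g ξ ξ = 1)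
    (hon : ∀ i j, g (e i) (e j) = if i = j then (1 : R) else 0)
    (hcomplete : ∀ X : W, X = ∑ i, g X (e i) • e i)
    (hstruct : ∀ X : W, nabla X ξ = φ (A X))
    (hDphi : ∀ X Y : W,
      nabla X (φ Y) - φ (nabla X Y) = g Y ξ • A X - g (A X) Y • ξ) :
    ∑ i, g (nabla (e i) (φ (A ξ))) (e i)
      = (∑ i, g (A (e i)) (e i)) * g (A ξ) ξ - g (A (A ξ)) ξ
        - ∑ i, g (nabla (e i) (A ξ) - A (nabla (e i) ξ)) (φ (e i))
        - ∑ i, g (φ (A (e i))) (A (φ (e i))) := by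
  have key : ∀ X : W, g (nabla X (φ (A ξ))) X =
      g (A X) X * g (A ξ) ξ - g (A (A ξ)) X * g ξ X
      - g (nabla X (A ξ) - A (nabla X ξ)) (φ X)
      - g (φ (A X)) (A (φ X)) := by
    intro X
    have h2 : nabla X (φ (A ξ)) =
        φ (nabla X (A ξ)) + (g (A ξ) ξ • A X - g (A X) (A ξ) • ξ) := by
      rw [← hDphi X (A ξ)]; abel
    have h4 : g (nabla X (A ξ)) (φ X)
        = g (nabla X (A ξ) - A (nabla X ξ)) (φ X) + g (φ (A X)) (A (φ X)) := by
      rw [map_sub, LinearMap.sub_apply, hstruct, hAsym]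
      ring
    have h5 : g (A X) (A ξ) = g (A (A ξ)) X := by
      rw [hAsym, hgsym, hAsym]
    rw [h2]
    simp only [map_add, map_sub, map_smul, LinearMap.add_apply, LinearMap.sub_apply,
      LinearMap.smul_apply, smul_eq_mul, hskew (nabla X (A ξ)) X, hgsym X (φ X)]
    rw [h4, h5]
    have h6 : g (A (nabla X ξ)) (φ X) = g (φ (A X)) (A (φ X)) := by
      rw [hstruct, hAsym]
    linear_combination -h6
  have hAA : g (A (A ξ)) ξ = ∑ i, g (A (A ξ)) (e i) * g ξ (e i) := by
    rw [hgsym]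
    calc g ξ (A (A ξ)) = g ξ (∑ i, g (A (A ξ)) (e i) • e i) := by rw [← hcomplete]
      _ = ∑ i, g (A (A ξ)) (e i) * g ξ (e i) := by
          simp [mul_comm]
  simp only [key]
  rw [Finset.sum_sub_distrib, Finset.sum_sub_distrib, Finset.sum_sub_distrib,
    ← Finset.sum_mul, hAA]
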